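/- Let h, w be positive integers, n = h + w, and let λ ∈ Y_{h,w} have width 𝗐(λ) = w. Let (a_1,…,a_n) be the binary sequence of λ (then a_n = 1), and let n > z_1 > z_2 > ⋯ > z_w ≥ 1 be the positions with a_{z_j} = 0. Then for each 1 ≤ i ≤ w, the diagram λ^{(i)} is the element of Y_{h,w} whose binary sequence is obtained from (a_1,…,a_n) by replacing the entry 0 at position z_i by 1, deleting the last entry a_n, and appending a 0 at the end, i.e., the sequence a_1 … a_{z_i−1} 1 a_{z_i+1} … a_{n−1} 0. -/

import Mathlib

/-- A Young diagram in an `h × w` box: an antitone sequence of `h` natural numbers,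
each at most `w`. -/
def Ydiag (h w : ℕ) : Type :=
  {f : Fin h → ℕ // Antitone f ∧ ∀ i, f i ≤ w}

/-- The sequence `(λ_2, …, λ_h, 0)` obtained by deleting the first row. -/
def shiftSeq (h : ℕ) (f : Fin h → ℕ) : Fin h → ℕ :=
  fun i => if hi : (i : ℕ) + 1 < h then f ⟨(i : ℕ) + 1, hi⟩ else 0

lemma shiftSeq_antitone {h : ℕ} {f : Fin h → ℕ} (hf : Antitone f) :
    Antitone (shiftSeq h f) := by
  intro i j hij
  unfold shiftSeq
  by_cases hj : (j : ℕ) + 1 < h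
  · have hi : (i : ℕ) + 1 < h := by
      have := Fin.le_def.mp hij; omega
    rw [dif_pos hj, dif_pos hi]
    exact hf (Fin.mk_le_mk.mpr (Nat.succ_le_succ (Fin.le_def.mp hij)))
  · simp [hj]

/-- The cyclic action `g` on `Y_{h,w}`: add a full column if the width is less than `w`,
otherwise delete the first row. -/
def gY {h w : ℕ} (lam : Ydiag h w) : Ydiag h w :=
  if hw : ∀ i, lam.1 i < w then
    ⟨fun i => lam.1 i + 1,
      fun i j hij => by simpa using lam.2.1 hij,
      fun i => hw i⟩
  else
    ⟨shiftSeq h lam.1, shiftSeq_antitone lam.2.1, by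
      intro i
      unfold shiftSeq
      by_cases hi : (i : ℕ) + 1 < h
      · simpa [hi] using lam.2.2 _
      · simp [hi]⟩

/-- `λ` is upper-triangular: `λ_i ≤ w (h − i) / h` for all `1 ≤ i ≤ h`
(written multiplicatively, with `i` the 1-based index). -/
def UpperTri {h w : ℕ} (lam : Ydiag h w) : Prop :=
  ∀ i : Fin h, h * lam.1 i ≤ w * (h - 1 - (i : ℕ))

/-- The transpose of a sequence of row lengths: `(transposeFun h f) j` is the number of
rows of `f` of length at least `j + 1` (so, `1`-based, `μ_p = #{i : λ_i ≥ p}`). -/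
def transposeFun (h : ℕ) (f : Fin h → ℕ) {w : ℕ} : Fin w → ℕ :=
  fun j => (Finset.univ.filter (fun i : Fin h => (j : ℕ) < f i)).card

/-- The transposed sequence `ν^{(i)} = (μ_1, …, μ_{w−i}, μ_{w−i+2} − 1, …, μ_w − 1, 0)`
defining the diagram `λ^{(i)}`, where `μ = λ^T` (all `0`-indexed here). -/
def nuSeq (h w : ℕ) (f : Fin h → ℕ) (i : ℕ) : Fin w → ℕ :=
  fun p =>
    if (p : ℕ) < w - i then transposeFun h f p
    else if hp : (p : ℕ) < w - 1 then
      transposeFun h f (⟨(p : ℕ) + 1, by omega⟩ : Fin w) - 1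
    else 0

/-- The diagram `λ^{(i)} = (ν^{(i)})^T`, as a sequence of `h` row lengths. -/
def lamStep (h w : ℕ) (f : Fin h → ℕ) (i : ℕ) : Fin h → ℕ :=
  transposeFun w (nuSeq h w f i)

/-- The binary sequence of a diagram `λ` (with rows `f`, `0`-indexed), as a function on
`Fin N`: position `p` carries a `1` exactly when `p = f (rev j) + j` for some
`j : Fin h`. -/
def binSeq (h N : ℕ) (f : Fin h → ℕ) : Fin N → Bool :=
  fun p => decide (∃ j : Fin h, (p : ℕ) = f j.rev + (j : ℕ))

open Finset

lemma transposeFun_le {h w : ℕ} (f : Fin h → ℕ) (a : Fin w) :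
    transposeFun h f a ≤ h := by
  simpa [transposeFun] using (Finset.card_filter_le univ (fun i : Fin h => (a : ℕ) < f i))

lemma transposeFun_antitone {h w : ℕ} (f : Fin h → ℕ) :
    Antitone (transposeFun h f (w := w)) := by
  intro a b hab
  apply Finset.card_le_card
  intro x hx
  simp only [transposeFun, mem_filter, mem_univ, true_and] at hx ⊢
  omega

lemma lt_iff_lt_transpose {h w : ℕ} {f : Fin h → ℕ} (hf : Antitone f)
    (a : Fin w) (b : Fin h) :
    (a : ℕ) < f b ↔ (b : ℕ) < transposeFun h f a := by
  constructor
  · intro hab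
    have hsub : Finset.Iic b ⊆ univ.filter (fun i : Fin h => (a : ℕ) < f i) := by
      intro x hx
      simp only [mem_filter, mem_univ, true_and]
      exact lt_of_lt_of_le hab (hf (mem_Iic.mp hx))
    have := Finset.card_le_card hsub
    rw [Fin.card_Iic] at this
    unfold transposeFun
    omega
  · intro hb
    by_contra hab
    push_neg at hab
    have hsub : univ.filter (fun i : Fin h => (a : ℕ) < f i) ⊆ Finset.Iio b := by
      intro x hx
      simp only [mem_filter, mem_univ, true_and] at hx
      rw [mem_Iio]
      by_contra hbx
      push_neg at hbx
      have := hf hbx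
      omega
    have := Finset.card_le_card hsub
    rw [Fin.card_Iio] at this
    unfold transposeFun at hb
    omega

lemma card_val_lt (w m : ℕ) (hm : m ≤ w) :
    (univ.filter (fun p : Fin w => (p : ℕ) < m)).card = m := by
  have : (univ.filter (fun p : Fin w => (p : ℕ) < m)) =
      (Finset.range m).attachFin (fun x hx => lt_of_lt_of_le (mem_range.mp hx) hm) := by
    ext p
    simp [Finset.mem_attachFin]
  rw [this, Finset.card_attachFin, Finset.card_range]

lemma transpose_transpose {h w : ℕ} {f : Fin h → ℕ} (hf : Antitone f)
    (hfw : ∀ i, f i ≤ w) (b : Fin h) :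
    transposeFun w (transposeFun h f) b = f b := by
  have : (univ.filter (fun p : Fin w => (b : ℕ) < transposeFun h f p)) =
      (univ.filter (fun p : Fin w => (p : ℕ) < f b)) := by
    ext p
    simp only [mem_filter, mem_univ, true_and]
    exact (lt_iff_lt_transpose hf p b).symm
  rw [transposeFun, this, card_val_lt _ _ (hfw b)]

lemma dual_mem {h w : ℕ} (g : Fin w → ℕ) (hg : Antitone g) (hgh : ∀ q, g q ≤ h)
    (p : Fin (h + w)) :
    (∃ j : Fin h, (p : ℕ) = transposeFun w g j.rev + (j : ℕ)) ↔
      ¬ ∃ q : Fin w, (p : ℕ) + (g q.rev + (q : ℕ)) = h + w - 1 := by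
  set A : Finset ℕ := Finset.image (fun j : Fin h => transposeFun w g j.rev + (j : ℕ)) univ with hA
  set B : Finset ℕ :=
    Finset.image (fun q : Fin w => (h + w - 1) - (g q.rev + (q : ℕ))) univ with hB
  have hgb : ∀ q : Fin w, g q.rev + (q : ℕ) ≤ h + w - 1 := by
    intro q
    have := hgh q.rev
    have := q.isLt
    omega
  have hAmono : StrictMono (fun j : Fin h => transposeFun w g j.rev + (j : ℕ)) := by
    intro a b hab
    have h1 : transposeFun w g a.rev ≤ transposeFun w g b.rev :=
      transposeFun_antitone g (le_of_lt (Fin.rev_lt_rev.mpr hab))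
    have := Fin.lt_def.mp hab
    dsimp only
    omega
  have hBmono : StrictMono (fun q : Fin w => g q.rev + (q : ℕ)) := by
    intro a b hab
    have h1 : g a.rev ≤ g b.rev := hg (le_of_lt (Fin.rev_lt_rev.mpr hab))
    have := Fin.lt_def.mp hab
    dsimp only
    omega
  have hcardA : A.card = h := by
    rw [hA, Finset.card_image_of_injective _ hAmono.injective, card_univ, Fintype.card_fin]
  have hcardB : B.card = w := by
    rw [hB, Finset.card_image_of_injective _ ?_, card_univ, Fintype.card_fin]
    intro a b hab
    simp only at hab
    have := hgb a; have := hgb b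
    have : g a.rev + (a : ℕ) = g b.rev + (b : ℕ) := by omega
    exact hBmono.injective this
  have hdisj : Disjoint A B := by
    rw [Finset.disjoint_left]
    rintro x hx hx'
    simp only [hA, hB, mem_image, mem_univ, true_and] at hx hx'
    obtain ⟨j, hj⟩ := hx
    obtain ⟨q, hq⟩ := hx'
    have hsum : transposeFun w g j.rev + (j : ℕ) + (g q.rev + (q : ℕ)) = h + w - 1 := by
      have := hgb q; omega
    -- key inequality
    have hkey := lt_iff_lt_transpose hg j.rev q.rev
    have hvj : (j.rev : ℕ) = h - (↑j + 1) := Fin.val_rev j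
    have hvq : (q.rev : ℕ) = w - (↑q + 1) := Fin.val_rev q
    have hj2 := j.isLt
    have hq2 := q.isLt
    rcases lt_or_ge ((j.rev : ℕ)) (g q.rev) with hlt | hle
    · have := hkey.mp hlt
      omega
    · have : ¬ ((q.rev : ℕ) < transposeFun w g j.rev) := fun hc => absurd (hkey.mpr hc) (by omega)
      omega
  have hcover : A ∪ B = Finset.range (h + w) := by
    apply Finset.eq_of_subset_of_card_le
    · intro x hx
      rw [Finset.mem_union] at hx
      rw [Finset.mem_range]
      rcases hx with hx | hx <;> simp only [hA, hB, mem_image, mem_univ, true_and] at hx <;>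
        obtain ⟨j, hj⟩ := hx
      · have := transposeFun_le (h := w) (w := h) g j.rev
        have := j.isLt
        omega
      · have := j.isLt
        omega
    · rw [Finset.card_range, Finset.card_union_of_disjoint hdisj, hcardA, hcardB]
  have hpmem : (p : ℕ) ∈ A ∪ B := by rw [hcover, Finset.mem_range]; exact p.isLt
  have hAB : (p : ℕ) ∈ A ↔ ¬ (p : ℕ) ∈ B := by
    rw [Finset.mem_union] at hpmem
    rw [Finset.disjoint_left] at hdisj
    constructor
    · intro ha hb; exact hdisj ha hb
    · intro hb; tauto
  have hBiff : (p : ℕ) ∈ B ↔ ∃ q : Fin w, (p : ℕ) + (g q.rev + (q : ℕ)) = h + w - 1 := by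
    simp only [hB, mem_image, mem_univ, true_and]
    constructor
    · rintro ⟨q, hq⟩; exact ⟨q, by have := hgb q; omega⟩
    · rintro ⟨q, hq⟩; exact ⟨q, by have := hgb q; omega⟩
  have hAiff : (p : ℕ) ∈ A ↔ ∃ j : Fin h, (p : ℕ) = transposeFun w g j.rev + (j : ℕ) := by
    simp only [hA, mem_image, mem_univ, true_and, eq_comm]
  rw [← hAiff, ← hBiff]
  exact hAB


lemma nuSeq_le {h w : ℕ} (f : Fin h → ℕ) (k : ℕ) (p : Fin w) :
    nuSeq h w f k p ≤ h := by
  unfold nuSeq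
  split_ifs with h1 h2
  · exact transposeFun_le f p
  · exact le_trans (Nat.sub_le _ _) (transposeFun_le f _)
  · exact Nat.zero_le _

lemma nuSeq_antitone {h w : ℕ} (f : Fin h → ℕ) (k : ℕ) :
    Antitone (nuSeq h w f k) := by
  have hM : ∀ (a b : Fin w), (a : ℕ) ≤ (b : ℕ) → transposeFun h f b ≤ transposeFun h f a :=
    fun a b hab => transposeFun_antitone f hab
  intro p q hpq
  have hpq' : (p : ℕ) ≤ (q : ℕ) := hpq
  unfold nuSeq
  split_ifs with h1 h2 h3 h4 h5 h6 <;>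
    first
      | exact hM _ _ hpq'
      | exact Nat.zero_le _
      | (exact le_trans (Nat.sub_le _ _) (hM _ _ (by simp only; omega)))
      | omega
      | (exact Nat.sub_le_sub_right (hM _ _ (by simp only; omega)) 1)

lemma nuSeq_rev_zero {h w : ℕ} (f : Fin h → ℕ) (k : ℕ) (hk : 1 ≤ k) (hw : 0 < w) :
    nuSeq h w f k (⟨0, hw⟩ : Fin w).rev = 0 := by
  have hr : (((⟨0, hw⟩ : Fin w).rev : Fin w) : ℕ) = w - (0 + 1) := Fin.val_rev _
  unfold nuSeq
  rw [if_neg (by omega), dif_neg (by omega)]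

lemma nuSeq_rev_high {h w : ℕ} (f : Fin h → ℕ) (k : ℕ) (q : Fin w) (h2 : k ≤ (q : ℕ)) :
    nuSeq h w f k q.rev = transposeFun h f q.rev := by
  have hr : ((q.rev : Fin w) : ℕ) = w - ((q : ℕ) + 1) := Fin.val_rev _
  have hq := q.isLt
  unfold nuSeq
  rw [if_pos (by omega)]

lemma nuSeq_rev_mid {h w : ℕ} (f : Fin h → ℕ) (k : ℕ)
    (hpos : ∀ r : Fin w, 1 ≤ transposeFun h f r)
    (q : Fin w) (h1 : 1 ≤ (q : ℕ)) (h2 : (q : ℕ) < k) (hq : (q : ℕ) - 1 < w) :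
    nuSeq h w f k q.rev + (q : ℕ) =
      transposeFun h f ((⟨(q : ℕ) - 1, hq⟩ : Fin w).rev) + ((q : ℕ) - 1) := by
  have hr : ((q.rev : Fin w) : ℕ) = w - ((q : ℕ) + 1) := Fin.val_rev _
  have hqlt := q.isLt
  unfold nuSeq
  rw [if_neg (by omega), dif_pos (show ((q.rev : Fin w) : ℕ) < w - 1 by omega)]
  have hidx : ∀ (hx : ((q.rev : Fin w) : ℕ) + 1 < w),
      (⟨((q.rev : Fin w) : ℕ) + 1, hx⟩ : Fin w) = (⟨(q : ℕ) - 1, hq⟩ : Fin w).rev := by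
    intro hx
    apply Fin.ext
    have h3 : ((⟨(q : ℕ) - 1, hq⟩ : Fin w).rev : ℕ) = w - (((q : ℕ) - 1) + 1) :=
      Fin.val_rev _
    show (q.rev : ℕ) + 1 = ((⟨(q : ℕ) - 1, hq⟩ : Fin w).rev : ℕ)
    omega
  rw [hidx]
  have := hpos ((⟨(q : ℕ) - 1, hq⟩ : Fin w).rev)
  omega


/-- Let `λ ∈ Y_{h,w}` have full width `w`, let `a = (a_1, …, a_n)` be its binary sequence
(`n = h + w`), and let `z_1 > z_2 > ⋯ > z_w` enumerate the positions of the zeros of `a`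
(here `z : Fin w → Fin n`, strictly decreasing, with image exactly the zeros of `a`).
Then for each `1 ≤ i ≤ w` the binary sequence of `λ^{(i)}` is obtained from `a` by
replacing the zero at position `z_i` by a one, deleting the last entry `a_n`, and
appending a zero at the end. -/
theorem binSeq_lamStep (h w : ℕ) (hh : 0 < h) (hw : 0 < w)
    (lam : Ydiag h w) (hwidth : lam.1 ⟨0, hh⟩ = w)
    (z : Fin w → Fin (h + w))
    (hza : StrictAnti (fun j : Fin w => ((z j : ℕ))))
    (hz0 : ∀ j : Fin w, binSeq h (h + w) lam.1 (z j) = false)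
    (hzall : ∀ p : Fin (h + w), binSeq h (h + w) lam.1 p = false → ∃ j : Fin w, z j = p) :
    ∀ i : Fin w,
      binSeq h (h + w) (lamStep h w lam.1 ((i : ℕ) + 1)) =
        fun p : Fin (h + w) =>
          if (p : ℕ) = h + w - 1 then false
          else if p = z i then true
          else binSeq h (h + w) lam.1 p := by
  intro i
  obtain ⟨f, hfa, hfw⟩ := lam
  simp only at hwidth hz0 hzall ⊢
  have hza' : ∀ {a b : Fin w}, a < b → (z b : ℕ) < (z a : ℕ) := fun hab => hza hab
  have hμa : Antitone (transposeFun h f (w := w)) := transposeFun_antitone f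
  have hμh : ∀ q : Fin w, transposeFun h f q ≤ h := fun q => transposeFun_le f q
  have hμ1 : ∀ q : Fin w, 1 ≤ transposeFun h f q := by
    intro q
    have h1 : (q : ℕ) < f ⟨0, hh⟩ := by rw [hwidth]; exact q.isLt
    have h2 := (lt_iff_lt_transpose hfa q ⟨0, hh⟩).mp h1
    omega
  -- T q = μ (rev q) + q
  have hTmono : StrictMono (fun q : Fin w => transposeFun h f q.rev + (q : ℕ)) := by
    intro a b hab
    have h1 : transposeFun h f a.rev ≤ transposeFun h f b.rev :=
      hμa (le_of_lt (Fin.rev_lt_rev.mpr hab))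
    have h2 := Fin.lt_def.mp hab
    simp only
    omega
  have hTb : ∀ q : Fin w, transposeFun h f q.rev + (q : ℕ) ≤ h + w - 1 := by
    intro q
    have := hμh q.rev
    have := q.isLt
    omega
  have hTf : transposeFun w (transposeFun h f) = f := funext (transpose_transpose hfa hfw)
  have hbin : ∀ p : Fin (h + w),
      binSeq h (h + w) f p = false ↔
        ∃ q : Fin w, (p : ℕ) + (transposeFun h f q.rev + (q : ℕ)) = h + w - 1 := by
    intro p
    have hd := dual_mem (transposeFun h f) hμa hμh p
    rw [hTf] at hd
    unfold binSeq
    rw [decide_eq_false_iff_not, hd, not_not]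
  -- identify z
  have hzval : ∀ j : Fin w, (z j : ℕ) + (transposeFun h f j.rev + (j : ℕ)) = h + w - 1 := by
    set e : Fin w → Fin (h + w) :=
      fun j => ⟨h + w - 1 - (transposeFun h f j.rev + (j : ℕ)), by have := hTb j; omega⟩ with he
    set Z : Finset (Fin (h + w)) :=
      univ.filter (fun p => binSeq h (h + w) f p = false) with hZ
    have hzinj : Function.Injective z := by
      intro a b hab
      by_contra hne
      rcases lt_or_gt_of_ne hne with hlt | hlt
      · exact absurd (congrArg Fin.val hab) (by have := hza' hlt; omega)
      · exact absurd (congrArg Fin.val hab) (by have := hza' hlt; omega)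
    have hZcard : Z.card = w := by
      have : Z = Finset.image z univ := by
        ext p
        simp only [hZ, mem_filter, mem_univ, true_and, mem_image]
        constructor
        · intro hp
          obtain ⟨j, hj⟩ := hzall p hp
          exact ⟨j, by simp [hj]⟩
        · rintro ⟨j, rfl⟩
          exact hz0 j
      rw [this, Finset.card_image_of_injective _ hzinj, card_univ, Fintype.card_fin]
    have hFmono : StrictMono (fun j : Fin w => z j.rev) := by
      intro a b hab
      rw [Fin.lt_def]
      exact hza' (Fin.rev_lt_rev.mpr hab)
    have hEmono : StrictMono (fun j : Fin w => e j.rev) := by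
      intro a b hab
      rw [Fin.lt_def]
      have h1 := hTmono (Fin.rev_lt_rev.mpr hab)
      have h2 := hTb a.rev
      have h3 := hTb b.rev
      simp only [he] at *
      omega
    have hFmem : ∀ j : Fin w, z j.rev ∈ Z := by
      intro j
      simp only [hZ, mem_filter, mem_univ, true_and]
      exact hz0 j.rev
    have hEmem : ∀ j : Fin w, e j.rev ∈ Z := by
      intro j
      simp only [hZ, mem_filter, mem_univ, true_and]
      apply (hbin _).mpr
      refine ⟨j.rev, ?_⟩
      have := hTb j.rev
      simp only [he]
      omega
    have hFE : (fun j : Fin w => z j.rev) = (fun j : Fin w => e j.rev) := by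
      rw [Finset.orderEmbOfFin_unique hZcard hFmem hFmono,
        Finset.orderEmbOfFin_unique hZcard hEmem hEmono]
    intro j
    have : z j = e j := by
      have := congrFun hFE j.rev
      simpa [Fin.rev_rev] using this
    rw [this]
    have := hTb j
    simp only [he]
    omega
  -- the nu-sequence facts
  have hνa : Antitone (nuSeq h w f ((i : ℕ) + 1)) := nuSeq_antitone f _
  have hνh : ∀ q : Fin w, nuSeq h w f ((i : ℕ) + 1) q ≤ h := nuSeq_le f _
  have hk1 : 1 ≤ (i : ℕ) + 1 := by omega
  have hkw : (i : ℕ) + 1 ≤ w := i.isLt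
  funext p
  by_cases hp1 : (p : ℕ) = h + w - 1
  · rw [if_pos hp1]
    have hdν := dual_mem (nuSeq h w f ((i : ℕ) + 1)) hνa hνh p
    unfold binSeq lamStep
    rw [decide_eq_false_iff_not, hdν, not_not]
    refine ⟨⟨0, hw⟩, ?_⟩
    rw [nuSeq_rev_zero f _ hk1 hw]
    simpa using hp1
  · rw [if_neg hp1]
    by_cases hp2 : p = z i
    · rw [if_pos hp2]
      have hdν := dual_mem (nuSeq h w f ((i : ℕ) + 1)) hνa hνh p
      unfold binSeq lamStep
      rw [decide_eq_true_eq, hdν]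
      rintro ⟨q, hq⟩
      have hzi := hzval i
      have hpz : (p : ℕ) = (z i : ℕ) := by rw [hp2]
      have hSq : nuSeq h w f ((i : ℕ) + 1) q.rev + (q : ℕ) =
          transposeFun h f i.rev + (i : ℕ) := by omega
      rcases Nat.eq_zero_or_pos (q : ℕ) with h0 | h0
      · have hq0 : q = ⟨0, hw⟩ := Fin.ext h0
        rw [hq0, nuSeq_rev_zero f _ hk1 hw] at hSq
        have := hμ1 i.rev
        simp at hSq
        omega
      · rcases Nat.lt_or_ge (q : ℕ) ((i : ℕ) + 1) with hqi | hqi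
        · have hqw : (q : ℕ) - 1 < w := by have := q.isLt; omega
          rw [nuSeq_rev_mid f _ hμ1 q h0 hqi hqw] at hSq
          have heq := hTmono.injective hSq
          have hv := congrArg Fin.val heq
          simp only at hv
          omega
        · rw [nuSeq_rev_high f _ q hqi] at hSq
          have heq := hTmono.injective hSq
          have hv := congrArg Fin.val heq
          omega
    · rw [if_neg hp2]
      unfold binSeq lamStep
      rw [decide_eq_decide]
      conv_rhs => rw [← hTf]
      rw [dual_mem (nuSeq h w f ((i : ℕ) + 1)) hνa hνh p,
        dual_mem (transposeFun h f) hμa hμh p]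
      apply not_congr
      constructor
      · rintro ⟨q, hq⟩
        rcases Nat.eq_zero_or_pos (q : ℕ) with h0 | h0
        · exfalso
          have hq0 : q = ⟨0, hw⟩ := Fin.ext h0
          rw [hq0, nuSeq_rev_zero f _ hk1 hw] at hq
          simp at hq
          omega
        · rcases Nat.lt_or_ge (q : ℕ) ((i : ℕ) + 1) with hqi | hqi
          · have hqw : (q : ℕ) - 1 < w := by have := q.isLt; omega
            rw [nuSeq_rev_mid f _ hμ1 q h0 hqi hqw] at hq
            exact ⟨⟨(q : ℕ) - 1, hqw⟩, hq⟩
          · rw [nuSeq_rev_high f _ q hqi] at hq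
            exact ⟨q, hq⟩
      · rintro ⟨q, hq⟩
        have hqne : (q : ℕ) ≠ (i : ℕ) := by
          intro he
          apply hp2
          apply Fin.ext
          have hzq := hzval q
          have hq' : q = i := Fin.ext he
          rw [hq'] at hzq hq
          omega
        rcases Nat.lt_or_ge (q : ℕ) (i : ℕ) with hlt | hge
        · have hq1w : (q : ℕ) + 1 < w := by have := i.isLt; omega
          refine ⟨⟨(q : ℕ) + 1, hq1w⟩, ?_⟩
          have hm := nuSeq_rev_mid f ((i : ℕ) + 1) hμ1 ⟨(q : ℕ) + 1, hq1w⟩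
            (by simp) (by simp; omega) (by simp)
          rw [hm]
          have hidx : (⟨(((⟨(q : ℕ) + 1, hq1w⟩ : Fin w) : ℕ)) - 1, by simp⟩ : Fin w) = q :=
            Fin.ext (by simp)
          rw [hidx]
          simpa using hq
        · have hgt : (i : ℕ) + 1 ≤ (q : ℕ) := by omega
          refine ⟨q, ?_⟩
          rw [nuSeq_rev_high f _ q hgt]
          exact hq
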